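/- Let R be the free noncommutative F-algebra on two generators X₁, X₂ over F = ℚ(A), with the endomorphisms T₁, T₁⁻, T₂, T₂⁻ and the two-sided ideal J as above. Then for k ∈ {1,2}, the element T₂⁻T₁⁻T₂⁻T₁T₂T₁(X_k) − X_k belongs to J; that is, the relation T₂⁻T₁⁻T₂⁻T₁T₂T₁(X_k) = X_k holds in the quotient algebra B = R/J. -/

import Mathlib

/-- `F = ℚ(A)`, the field of rational functions in one variable over `ℚ`. -/
noncomputable abbrev F : Type := RatFunc ℚ

/-- The variable `A ∈ ℚ(A)`. -/
noncomputable def A : F := RatFunc.X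

/-- The deformed bracket `[x,y]_A = A·(x*y) − A⁻¹·(y*x)` in an `F`-algebra. -/
noncomputable def brA {S : Type*} [Ring S] [Algebra F S] (x y : S) : S :=
  A • (x * y) - A⁻¹ • (y * x)

/-- `R`, the free noncommutative `F`-algebra on two generators. -/
noncomputable abbrev R : Type := FreeAlgebra F (Fin 2)

/-- The first generator `X₁`. -/
noncomputable def X1 : R := FreeAlgebra.ι F 0

/-- The second generator `X₂`. -/
noncomputable def X2 : R := FreeAlgebra.ι F 1

/-- The generators as a function on `Fin 2`. -/
noncomputable def X : Fin 2 → R := ![X1, X2]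

/-- `T₁ : X₁ ↦ X₁, X₂ ↦ [X₁,X₂]_A`. -/
noncomputable def T1 : R →ₐ[F] R := FreeAlgebra.lift F ![X1, brA X1 X2]

/-- `T₁⁻ : X₁ ↦ X₁, X₂ ↦ [X₂,X₁]_A`. -/
noncomputable def T1inv : R →ₐ[F] R := FreeAlgebra.lift F ![X1, brA X2 X1]

/-- `T₂ : X₁ ↦ [X₂,X₁]_A, X₂ ↦ X₂`. -/
noncomputable def T2 : R →ₐ[F] R := FreeAlgebra.lift F ![brA X2 X1, X2]

/-- `T₂⁻ : X₁ ↦ [X₁,X₂]_A, X₂ ↦ X₂`. -/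
noncomputable def T2inv : R →ₐ[F] R := FreeAlgebra.lift F ![brA X1 X2, X2]

/-- The two-sided ideal `J` generated by `[[X₁,X₂]_A, X₁]_A − X₂` and
`[[X₂,X₁]_A, X₂]_A − X₁`. -/
noncomputable def J : TwoSidedIdeal R :=
  TwoSidedIdeal.span {brA (brA X1 X2) X1 - X2, brA (brA X2 X1) X2 - X1}


/-!
Both `T₁⁻` and `T₂⁻` descend to `B = R/J`, and on `B` they invert `T₁` and `T₂`, so the claim
reduces to the braid relation `T₁T₂T₁ = T₂T₁T₂` on `B`. Everything comes down to relations of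
the images `x₁, x₂` of the generators: `(x₁, x₂)` is a *braid pair*, i.e.
`[[x₁,x₂]_A,x₁]_A = x₂` and `[[x₂,x₁]_A,x₂]_A = x₁`, and braid pairs are stable under
`(a, b) ↦ (a, [b,a]_A)` thanks to the identity `[[x,y]_A,x]_A = [x,[y,x]_A]_A`, valid in every
`F`-algebra.
-/

section BraidPair

variable {S : Type*} [Ring S] [Algebra F S]

theorem brA_brA_self_left (x y : S) : brA (brA x y) x = brA x (brA y x) := by
  simp only [brA, mul_sub, sub_mul, smul_mul_assoc, mul_smul_comm, smul_smul, mul_assoc, smul_sub]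
  rw [mul_comm A⁻¹ A]
  abel

def IsBraidPair (a b : S) : Prop :=
  brA (brA a b) a = b ∧ brA (brA b a) b = a

namespace IsBraidPair

variable {a b : S}

theorem symm (h : IsBraidPair a b) : IsBraidPair b a := ⟨h.2, h.1⟩

theorem brA_brA_right (h : IsBraidPair a b) : brA a (brA b a) = b :=
  (brA_brA_self_left a b).symm.trans h.1

theorem brA_right (h : IsBraidPair a b) : IsBraidPair a (brA b a) := by
  refine ⟨?_, ?_⟩
  · rw [← brA_brA_self_left, h.1]
  · rw [brA_brA_self_left, h.brA_brA_right, h.2]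

end IsBraidPair

end BraidPair

theorem map_brA {S T : Type*} [Ring S] [Algebra F S] [Ring T] [Algebra F T] (f : S →ₐ[F] T)
    (x y : S) : f (brA x y) = brA (f x) (f y) := by
  simp only [brA, map_sub, map_smul, map_mul]

@[simp] theorem T1_X1 : T1 X1 = X1 := by simp [T1, X1]
@[simp] theorem T1_X2 : T1 X2 = brA X1 X2 := by simp [T1, X2]
@[simp] theorem T1inv_X1 : T1inv X1 = X1 := by simp [T1inv, X1]
@[simp] theorem T1inv_X2 : T1inv X2 = brA X2 X1 := by simp [T1inv, X2]
@[simp] theorem T2_X1 : T2 X1 = brA X2 X1 := by simp [T2, X1]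
@[simp] theorem T2_X2 : T2 X2 = X2 := by simp [T2, X2]
@[simp] theorem T2inv_X1 : T2inv X1 = brA X1 X2 := by simp [T2inv, X1]
@[simp] theorem T2inv_X2 : T2inv X2 = X2 := by simp [T2inv, X2]

noncomputable abbrev B : Type := J.ringCon.Quotient

noncomputable def π : R →ₐ[F] B := J.ringCon.mkₐ F

theorem π_eq_π_iff {x y : R} : π x = π y ↔ x - y ∈ J :=
  J.ringCon.eq.trans (J.rel_iff x y)

theorem isBraidPair_π : IsBraidPair (π X1) (π X2) := by
  constructor <;> rw [← map_brA, ← map_brA, π_eq_π_iff] <;>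
    exact TwoSidedIdeal.subset_span (by simp)

theorem map_mem_J_of_isBraidPair {f : R →ₐ[F] R} (hf : IsBraidPair (π (f X1)) (π (f X2)))
    {x : R} (hx : x ∈ J) : f x ∈ J := by
  suffices J ≤ J.comap f from (TwoSidedIdeal.mem_comap f).1 (this hx)
  refine TwoSidedIdeal.span_le.2 ?_
  rintro _ (rfl | rfl) <;> rw [SetLike.mem_coe, TwoSidedIdeal.mem_comap f, map_sub, ← π_eq_π_iff]
  · simpa only [map_brA] using hf.1
  · simpa only [map_brA] using hf.2

theorem π_map_congr {f : R →ₐ[F] R} (hf : IsBraidPair (π (f X1)) (π (f X2))) ⦃x y : R⦄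
    (h : π x = π y) : π (f x) = π (f y) := by
  rw [π_eq_π_iff, ← map_sub] at *
  exact map_mem_J_of_isBraidPair hf h

theorem π_apply_eq_of_X1_X2 {f g : R →ₐ[F] R} (h1 : π (f X1) = π (g X1))
    (h2 : π (f X2) = π (g X2)) (x : R) : π (f x) = π (g x) := by
  have : π.comp f = π.comp g := FreeAlgebra.hom_ext <| funext fun i => by
    fin_cases i
    exacts [h1, h2]
  exact DFunLike.congr_fun this x

theorem isBraidPair_π_T1inv : IsBraidPair (π (T1inv X1)) (π (T1inv X2)) := by
  rw [T1inv_X1, T1inv_X2, map_brA]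
  exact isBraidPair_π.brA_right

theorem isBraidPair_π_T2inv : IsBraidPair (π (T2inv X1)) (π (T2inv X2)) := by
  rw [T2inv_X1, T2inv_X2, map_brA]
  exact isBraidPair_π.symm.brA_right.symm

theorem π_T1inv_T1 (x : R) : π (T1inv (T1 x)) = π x :=
  π_apply_eq_of_X1_X2 (f := T1inv.comp T1) (g := AlgHom.id F R)
    (by simp) (by simpa [map_brA] using isBraidPair_π.brA_brA_right) x

theorem π_T2inv_T2 (x : R) : π (T2inv (T2 x)) = π x :=
  π_apply_eq_of_X1_X2 (f := T2inv.comp T2) (g := AlgHom.id F R)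
    (by simpa [map_brA] using isBraidPair_π.symm.brA_brA_right) (by simp) x

theorem π_T1_T2_T1 (x : R) : π (T1 (T2 (T1 x))) = π (T2 (T1 (T2 x))) :=
  π_apply_eq_of_X1_X2 (f := T1.comp (T2.comp T1)) (g := T2.comp (T1.comp T2))
    (by simp [map_brA, isBraidPair_π.1, isBraidPair_π.2, isBraidPair_π.brA_brA_right])
    (by simp [map_brA, isBraidPair_π.1, isBraidPair_π.2, isBraidPair_π.symm.brA_brA_right]) x

/-- The relation `T₂⁻T₁⁻T₂⁻T₁T₂T₁(X_k) = X_k` holds in the quotient `B = R/J`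
(the braid relation `t₁t₂t₁ = t₂t₁t₂` among the corresponding Dehn twists). -/
theorem braid_relation_inverse_form_mem (k : Fin 2) :
    T2inv (T1inv (T2inv (T1 (T2 (T1 (X k)))))) - X k ∈ J := by
  have hT1inv := π_map_congr isBraidPair_π_T1inv
  have hT2inv := π_map_congr isBraidPair_π_T2inv
  rw [← π_eq_π_iff]
  calc π (T2inv (T1inv (T2inv (T1 (T2 (T1 (X k)))))))
      = π (T2inv (T1inv (T2inv (T2 (T1 (T2 (X k))))))) :=
        hT2inv (hT1inv (hT2inv (π_T1_T2_T1 _)))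
    _ = π (T2inv (T1inv (T1 (T2 (X k))))) := hT2inv (hT1inv (π_T2inv_T2 _))
    _ = π (T2inv (T2 (X k))) := hT2inv (π_T1inv_T1 _)
    _ = π (X k) := π_T2inv_T2 _
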